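/- arXiv:1404.4033 — 5 statements merged into one kernel-verified Lean document; each statement's English description precedes it below -/
import Mathlib

section
/- Let s_n be the number of words of length n over {A,B,C,D} starting with A, with no other A, and with no CB-factor. Then the generating function S(x) = Σ_{n≥1} s_n x^n satisfies S(x) = x/(1 - 3x + x²) as formal power series. -/
/-!
Deleting the initial `A` identifies segments of length `n + 1` with the words of length `n`
over `{B, C, D}` without a factor `CB`. Sorting such words by their first letter: `B` and `D`
may precede any shorter word, `C` only one that does not start with `B`, and the words of
length `n + 1` starting with `B` correspond to all words of length `n`. Hence their numbers
satisfy `u (n + 2) + u n = 3 * u (n + 1)`, which is the coefficientwise form of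
`(1 - 3x + x²) S(x) = x`.
-/

def IsSegment (w : List (Fin 4)) : Prop :=
  ∃ t : List (Fin 4), w = (0 : Fin 4) :: t ∧ (0 : Fin 4) ∉ t

def NoCB (w : List (Fin 4)) : Prop :=
  ∀ i : ℕ, ¬ (w[i]? = some (2 : Fin 4) ∧ w[i + 1]? = some (1 : Fin 4))

noncomputable def segCount (n : ℕ) : ℕ :=
  Nat.card {w : List (Fin 4) // w.length = n ∧ IsSegment w ∧ NoCB w}

theorem List.pair_infix_cons_iff {α : Type*} {x y a : α} {t : List α} :
    [x, y] <:+: a :: t ↔ (a = x ∧ t.head? = some y) ∨ [x, y] <:+: t := by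
  rw [List.infix_cons_iff, List.prefix_cons_iff]
  simp [List.singleton_prefix_iff_head?_eq_some, @eq_comm _ x]

theorem List.pair_infix_iff_exists_getElem? {α : Type*} {x y : α} {w : List α} :
    [x, y] <:+: w ↔ ∃ i : ℕ, w[i]? = some x ∧ w[i + 1]? = some y := by
  induction w with
  | nil => simp
  | cons a t ih =>
    rw [pair_infix_cons_iff, ih]
    conv_rhs => rw [← Nat.or_exists_add_one]
    simp [List.head?_eq_getElem?]

section AvoidingWords

variable {α : Type*} (s : Finset α) (x y : α)

def avoidingWords (n : ℕ) : Set (List α) :=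
  {w | w.length = n ∧ (∀ a ∈ w, a ∈ s) ∧ ¬[x, y] <:+: w}

instance (n : ℕ) : Finite (avoidingWords s x y n) := by
  refine Set.Finite.to_subtype <|
    ((List.finite_length_eq s n).image (List.map Subtype.val)).subset ?_
  rintro w ⟨hlen, hs, -⟩
  lift w to List s using hs
  exact ⟨w, by simpa using hlen, rfl⟩

variable {s x y}

theorem cons_mem_avoidingWords_iff {n : ℕ} {a : α} {t : List α} :
    a :: t ∈ avoidingWords s x y (n + 1) ↔
      a ∈ s ∧ ¬(a = x ∧ t.head? = some y) ∧ t ∈ avoidingWords s x y n := by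
  simp only [avoidingWords, Set.mem_ofPred_eq, List.length_cons, List.mem_cons,
    List.pair_infix_cons_iff]
  grind

namespace avoidingWords

def consEquiv {n : ℕ} {a : α} (ha : a ∈ s) :
    {t : avoidingWords s x y n // ¬(a = x ∧ t.1.head? = some y)} ≃
      {w : avoidingWords s x y (n + 1) // w.1.head? = some a} where
  toFun t := ⟨⟨a :: t.1.1, cons_mem_avoidingWords_iff.2 ⟨ha, t.2, t.1.2⟩⟩, rfl⟩
  invFun w := ⟨⟨w.1.1.tail, by
      obtain ⟨⟨_ | ⟨b, t⟩, hw⟩, hb⟩ := w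
      · simp at hb
      · exact (cons_mem_avoidingWords_iff.1 hw).2.2⟩, by
      obtain ⟨⟨_ | ⟨b, t⟩, hw⟩, hb⟩ := w
      · simp at hb
      · obtain rfl : b = a := by simpa using hb
        exact (cons_mem_avoidingWords_iff.1 hw).2.1⟩
  left_inv t := rfl
  right_inv := by
    rintro ⟨⟨_ | ⟨b, t⟩, hw⟩, hb⟩
    · simp at hb
    · obtain rfl : b = a := by simpa using hb
      rfl

def headLetter {n : ℕ} (w : avoidingWords s x y (n + 1)) : s :=
  ⟨w.1.head (List.ne_nil_of_length_eq_add_one w.2.1), w.2.2.1 _ (List.head_mem _)⟩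

theorem headLetter_eq_iff {n : ℕ} {w : avoidingWords s x y (n + 1)} {a : s} :
    headLetter w = a ↔ w.1.head? = some a.1 :=
  Subtype.ext_iff.trans (List.head_eq_iff_head?_eq_some _)

end avoidingWords

open avoidingWords

theorem avoidingWords_zero : avoidingWords s x y 0 = {[]} := by
  ext w
  simp +contextual [avoidingWords, List.length_eq_zero_iff]

theorem card_avoidingWords_zero : Nat.card (avoidingWords s x y 0) = 1 := by
  rw [avoidingWords_zero, Nat.card_unique]

theorem card_avoidingWords_succ (n : ℕ) :
    Nat.card (avoidingWords s x y (n + 1)) =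
      ∑ a : s, Nat.card {t : avoidingWords s x y n // ¬(a.1 = x ∧ t.1.head? = some y)} := by
  rw [← Nat.card_congr (Equiv.sigmaFiberEquiv headLetter), Nat.card_sigma]
  exact Finset.sum_congr rfl fun a _ => Nat.card_congr <|
    (Equiv.subtypeEquivRight fun _ => headLetter_eq_iff).trans (consEquiv a.2).symm

theorem card_avoidingWords_succ_add (hx : x ∈ s) (n : ℕ) :
    Nat.card (avoidingWords s x y (n + 1)) +
        Nat.card {t : avoidingWords s x y n // t.1.head? = some y} =
      s.card * Nat.card (avoidingWords s x y n) := by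
  classical
  have fiber (a : s) :
      Nat.card {t : avoidingWords s x y n // ¬(a.1 = x ∧ t.1.head? = some y)} +
          (if a = ⟨x, hx⟩ then
            Nat.card {t : avoidingWords s x y n // t.1.head? = some y} else 0) =
        Nat.card (avoidingWords s x y n) := by
    split_ifs with ha
    · subst ha
      simp only [true_and]
      rw [add_comm, ← Nat.card_sum, Nat.card_congr (Equiv.sumCompl _)]
    · have ha' : a.1 ≠ x := fun h => ha (Subtype.ext h)
      rw [add_zero]
      exact Nat.card_congr (Equiv.subtypeUnivEquiv fun t => by simp [ha'])
  have total := Finset.sum_congr rfl fun a (_ : a ∈ Finset.univ) => fiber a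
  rw [Finset.sum_add_distrib, Finset.sum_ite_eq', if_pos (Finset.mem_univ _)] at total
  rw [card_avoidingWords_succ, total]
  simp

theorem card_avoidingWords_head_eq (hxy : x ≠ y) (hy : y ∈ s) (n : ℕ) :
    Nat.card {w : avoidingWords s x y (n + 1) // w.1.head? = some y} =
      Nat.card (avoidingWords s x y n) :=
  (Nat.card_congr (consEquiv hy).symm).trans <|
    Nat.card_congr (Equiv.subtypeUnivEquiv fun _ => by simp [hxy.symm])

theorem card_avoidingWords_add_two (hxy : x ≠ y) (hx : x ∈ s) (hy : y ∈ s) (n : ℕ) :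
    Nat.card (avoidingWords s x y (n + 2)) + Nat.card (avoidingWords s x y n) =
      s.card * Nat.card (avoidingWords s x y (n + 1)) := by
  rw [← card_avoidingWords_head_eq hxy hy n, card_avoidingWords_succ_add hx (n + 1)]

theorem card_avoidingWords_one : Nat.card (avoidingWords s x y 1) = s.card := by
  have fiber (a : s) :
      Nat.card {t : avoidingWords s x y 0 // ¬(a.1 = x ∧ t.1.head? = some y)} = 1 := by
    rw [← card_avoidingWords_zero (s := s) (x := x) (y := y)]
    refine Nat.card_congr (Equiv.subtypeUnivEquiv fun t => ?_)
    rw [show t.1 = [] by simpa [avoidingWords_zero] using t.2]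
    simp
  rw [card_avoidingWords_succ, Finset.sum_congr rfl fun a _ => fiber a]
  simp

end AvoidingWords

open PowerSeries in
theorem PowerSeries.mul_mk_of_linear_recurrence {R : Type*} [CommRing R] (f : ℕ → R) (p q : R)
    (h : ∀ n, f (n + 2) = p * f (n + 1) + q * f n) :
    (1 - C p * X - C q * X ^ 2) * mk f = C (f 0) + C (f 1 - p * f 0) * X := by
  ext (_ | _ | n) <;> simp [sub_mul, mul_assoc, pow_two, h]

theorem noCB_iff (w : List (Fin 4)) : NoCB w ↔ ¬[2, 1] <:+: w := by
  simp [NoCB, List.pair_infix_iff_exists_getElem?]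

theorem segCount_zero : segCount 0 = 0 := by
  rw [segCount, Nat.card_eq_zero]
  exact Or.inl ⟨fun ⟨_, hlen, ⟨_, rfl, _⟩, _⟩ => by simp at hlen⟩

theorem segCount_succ (n : ℕ) :
    segCount (n + 1) = Nat.card (avoidingWords ({1, 2, 3} : Finset (Fin 4)) 2 1 n) := by
  have letters : ∀ a : Fin 4, a ∈ ({1, 2, 3} : Finset (Fin 4)) ↔ a ≠ 0 := by decide
  have segments : {w | w.length = n + 1 ∧ IsSegment w ∧ NoCB w} =
      List.cons 0 '' avoidingWords {1, 2, 3} 2 1 n := by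
    ext w
    constructor
    · rintro ⟨hlen, ⟨t, rfl, h0⟩, hcb⟩
      refine ⟨t, ⟨by simpa using hlen, fun a ha => (letters a).2 (ne_of_mem_of_not_mem ha h0),
        ?_⟩, rfl⟩
      simpa [noCB_iff, List.pair_infix_cons_iff] using hcb
    · rintro ⟨t, ⟨hlen, hmem, hcb⟩, rfl⟩
      refine ⟨by simpa, ⟨t, rfl, fun h => (letters 0).1 (hmem 0 h) rfl⟩, ?_⟩
      simpa [noCB_iff, List.pair_infix_cons_iff]
  rw [segCount, ← Nat.card_image_of_injective List.cons_injective, ← segments]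
  rfl

theorem segCount_one : segCount 1 = 1 := by
  rw [segCount_succ, card_avoidingWords_zero]

theorem segCount_add_two (n : ℕ) : segCount (n + 2) + segCount n = 3 * segCount (n + 1) := by
  cases n with
  | zero =>
    rw [segCount_zero, segCount_succ, segCount_succ, card_avoidingWords_one,
      card_avoidingWords_zero]
    rfl
  | succ n =>
    simp only [segCount_succ]
    exact card_avoidingWords_add_two (by decide) (by decide) (by decide) n

open PowerSeries in
/-- `S(x) = Σ_{n ≥ 1} s_n x^n` satisfies `S(x) = x / (1 - 3x + x²)`, stated in the
equivalent multiplied-through form `(1 - 3x + x²) · S(x) = x`. -/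
theorem segCount_generating_function :
    (1 - 3 * (X : PowerSeries ℚ) + X ^ 2) *
      PowerSeries.mk (fun n => if n = 0 then 0 else (segCount n : ℚ)) = X := by
  have coeffs :
      (fun n => if n = 0 then 0 else (segCount n : ℚ)) = fun n => (segCount n : ℚ) := by
    funext n
    split_ifs with h <;> simp [h, segCount_zero]
  have recurrence (n : ℕ) :
      (segCount (n + 2) : ℚ) = 3 * segCount (n + 1) + (-1) * segCount n := by
    have := congrArg (Nat.cast : ℕ → ℚ) (segCount_add_two n)
    push_cast at this
    linarith
  have denominator : (1 - 3 * X + X ^ 2 : ℚ⟦X⟧) = 1 - C 3 * X - C (-1) * X ^ 2 := by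
    simp only [map_neg, map_one, map_ofNat]
    ring
  rw [coeffs, denominator, mul_mk_of_linear_recurrence _ _ _ recurrence]
  simp [segCount_zero, segCount_one]
end

section
/- Let p = p_1...p_n be a 1324-avoiding permutation colored by the greedy rule (each entry is colored red unless doing so would create an all-red 132-pattern, in which case it is colored blue). If p_j > p_i for some i < j where p_i is blue, then p_j is also blue. -/
def GreedyColoring {n : ℕ} (p : Equiv.Perm (Fin n)) (blue : Fin n → Prop) : Prop :=
  ∀ i : Fin n, blue i ↔
    ∃ a b : Fin n, a < b ∧ b < i ∧ ¬ blue a ∧ ¬ blue b ∧ p a < p i ∧ p i < p b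

/-- `p` avoids the pattern 1324. -/
def Avoids1324 {n : ℕ} (p : Equiv.Perm (Fin n)) : Prop :=
  ¬ ∃ i j k l : Fin n, i < j ∧ j < k ∧ k < l ∧
    p i < p k ∧ p k < p j ∧ p j < p l

/-- Any entry larger than an earlier blue entry is itself blue. -/
theorem larger_than_blue_is_blue {n : ℕ} (p : Equiv.Perm (Fin n))
    (blue : Fin n → Prop) (hp : Avoids1324 p) (h : GreedyColoring p blue) :
    ∀ i j : Fin n, i < j → blue i → p i < p j → blue j := by
  intro i j hij hbi hpij
  obtain ⟨a, b, hab, hbi', hra, hrb, hpa, hpb⟩ := (h i).1 hbi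
  have hpjb : p j < p b := by
    rcases lt_trichotomy (p j) (p b) with hlt | heq | hgt
    · exact hlt
    · exact absurd (p.injective heq) (by omega)
    · exact absurd ⟨a, b, i, j, hab, hbi', hij, hpa, hpb, hgt⟩ hp
  exact (h j).2 ⟨a, b, hab, lt_trans hbi' hij, hra, hrb, lt_trans hpa hpij, hpjb⟩
end

section
/- Let p = p_1...p_n be a 1324-avoiding permutation colored by the greedy rule. Then the subsequence of blue entries avoids the pattern 213. -/
/-- The blue entries of the greedy coloring of a 1324-avoiding permutation form a
213-avoiding subsequence. -/
theorem blue_avoids_213 {n : ℕ} (p : Equiv.Perm (Fin n)) (blue : Fin n → Prop)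
    (hp : Avoids1324 p) (h : GreedyColoring p blue) :
    ¬ ∃ i j k : Fin n, i < j ∧ j < k ∧ blue i ∧ blue j ∧ blue k ∧
      p j < p i ∧ p i < p k := by
  rintro ⟨i, j, k, hij, hjk, bi, bj, bk, hji, hik⟩
  obtain ⟨c, d, hcd, hdi, rc, rd, hci, hid⟩ := (h i).mp bi
  obtain ⟨a, b, hab, hbj, ra, rb, haj, hjb⟩ := (h j).mp bj
  -- a is after i
  have hia : i < a := by
    rcases lt_trichotomy a i with h1 | h1 | h1
    · exact (hp ⟨a, i, j, k, h1, hij, hjk, haj, hji, hik⟩).elim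
    · exact (ra (h1 ▸ bi)).elim
    · exact h1
  have hib : i < b := hia.trans hab
  -- p k < p b
  have hkb : p k < p b := by
    rcases lt_trichotomy (p b) (p k) with h1 | h1 | h1
    · exact (hp ⟨a, b, j, k, hab, hbj, hjk, haj, hjb, h1⟩).elim
    · exact (rb ((p.injective h1) ▸ bk)).elim
    · exact h1
  -- p d < p b
  have hdb : p d < p b := by
    rcases lt_trichotomy (p b) (p d) with h1 | h1 | h1
    · exact (rb ((h b).mpr ⟨c, d, hcd, hdi.trans hib, rc, rd,
        hci.trans (hik.trans hkb), h1⟩)).elim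
    · exact absurd (p.injective h1) (ne_of_gt (hdi.trans hib))
    · exact h1
  exact hp ⟨c, d, i, b, hcd, hdi, hib, hci, hid, hdb⟩
end

section
/- The polynomial q(x) = x⁶ - 5x⁵ + 14x⁴ - 26x³ + 22x² - 8x + 1 has a real root α in the interval (0.2695, 0.2696), and every complex root of q has modulus at least α. -/
/-!
Write `z = x + iy`. Then `Im q(z) = y · Q(x, y)` for a polynomial `Q` with `Q(x, 0) = q'(x)`,
and `Q < 0` on the closed disc of radius `0.2696`. So `q` has no non-real roots in that disc, and
`q` is strictly decreasing on `[-0.2696, 0.2696]`; the root `α` found by the intermediate value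
theorem is therefore the only root of `q` in the disc of radius `0.2696`.
-/

open Set

def q {R : Type*} [CommRing R] (x : R) : R :=
  x ^ 6 - 5 * x ^ 5 + 14 * x ^ 4 - 26 * x ^ 3 + 22 * x ^ 2 - 8 * x + 1

/-- `Im q(x + iy) / y`, which at `y = 0` is `q'(x)`. -/
def qImQuot (x y : ℝ) : ℝ :=
  6 * x ^ 5 - 25 * x ^ 4 + 56 * x ^ 3 - 78 * x ^ 2 + 44 * x - 8
    - y ^ 2 * (20 * x ^ 3 - 50 * x ^ 2 + 56 * x - 26) + y ^ 4 * (6 * x - 5)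

theorem im_q (z : ℂ) : (q z).im = z.im * qImQuot z.re z.im := by
  simp only [q, qImQuot, pow_succ, pow_zero, one_mul, Complex.mul_im, Complex.mul_re,
    Complex.sub_im, Complex.add_im, Complex.one_im, Complex.re_ofNat, Complex.im_ofNat]
  ring

theorem q_ofReal (x : ℝ) : q (x : ℂ) = q x := by
  simp [q]

theorem qImQuot_neg {x y : ℝ} (h : x ^ 2 + y ^ 2 ≤ 0.0727) : qImQuot x y < 0 := by
  unfold qImQuot
  nlinarith [sq_nonneg y, sq_nonneg x, sq_nonneg (y*y), sq_nonneg (x*y), sq_nonneg (x+1),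
    sq_nonneg (x-1), sq_nonneg (x*x), mul_nonneg (sq_nonneg y) (sq_nonneg y),
    sq_nonneg (x - 0.2696), sq_nonneg (x + 0.2696)]

theorem hasDerivAt_q (x : ℝ) : HasDerivAt q (qImQuot x 0) x := by
  refine (((((((hasDerivAt_pow 6 x).sub ((hasDerivAt_pow 5 x).const_mul 5)).add
    ((hasDerivAt_pow 4 x).const_mul 14)).sub ((hasDerivAt_pow 3 x).const_mul 26)).add
    ((hasDerivAt_pow 2 x).const_mul 22)).sub ((hasDerivAt_id x).const_mul 8)).add_const 1).congr_deriv
    ?_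
  simp only [qImQuot]
  norm_num
  ring

theorem strictAntiOn_q : StrictAntiOn (q : ℝ → ℝ) (Icc (-0.2696) 0.2696) := by
  refine strictAntiOn_of_deriv_neg (convex_Icc _ _)
    (fun x _ => (hasDerivAt_q x).continuousAt.continuousWithinAt) ?_
  intro x hx
  rw [interior_Icc] at hx
  rw [(hasDerivAt_q x).deriv]
  apply qImQuot_neg
  nlinarith [hx.1, hx.2]

theorem exists_root_q : ∃ α ∈ Ioo (0.2695 : ℝ) 0.2696, q α = 0 :=
  intermediate_value_Ioo' (by norm_num)
    (fun x _ => (hasDerivAt_q x).continuousAt.continuousWithinAt) (by norm_num [q])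

theorem q_ne_zero_of_abs_lt {α x : ℝ} (hα : α ≤ 0.2696) (hqα : q α = 0) (hx : |x| < α) :
    q x ≠ 0 := by
  obtain ⟨hlo, hhi⟩ := abs_lt.mp hx
  have hqx : q α < q x :=
    strictAntiOn_q ⟨by linarith, by linarith⟩ ⟨by linarith, hα⟩ hhi
  linarith

theorem q_ne_zero_of_im_ne_zero {z : ℂ} (hz : ‖z‖ < 0.2696) (him : z.im ≠ 0) : q z ≠ 0 := by
  intro hq
  have hdisk : z.re ^ 2 + z.im ^ 2 ≤ 0.0727 := by
    have : z.re ^ 2 + z.im ^ 2 = ‖z‖ ^ 2 := by rw [Complex.sq_norm, Complex.normSq_apply]; ring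
    nlinarith [norm_nonneg z]
  have h := im_q z
  rw [hq, Complex.zero_im, eq_comm, mul_eq_zero] at h
  exact h.elim him (qImQuot_neg hdisk).ne

theorem q_smallest_root :
    ∃ α : ℝ, α ∈ Set.Ioo (0.2695 : ℝ) 0.2696 ∧
      α ^ 6 - 5 * α ^ 5 + 14 * α ^ 4 - 26 * α ^ 3 + 22 * α ^ 2 - 8 * α + 1 = 0 ∧
      ∀ ζ : ℂ, ζ ^ 6 - 5 * ζ ^ 5 + 14 * ζ ^ 4 - 26 * ζ ^ 3 + 22 * ζ ^ 2 - 8 * ζ + 1 = 0 →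
        α ≤ ‖ζ‖ := by
  obtain ⟨α, hα, hqα⟩ := exists_root_q
  refine ⟨α, hα, hqα, fun ζ hζ => ?_⟩
  change q ζ = 0 at hζ
  by_contra! hlt
  rcases eq_or_ne ζ.im 0 with him | him
  · have hre : ζ = (ζ.re : ℂ) := Complex.ext rfl (by simpa using him)
    rw [hre, q_ofReal, Complex.ofReal_eq_zero] at hζ
    refine q_ne_zero_of_abs_lt hα.2.le hqα ?_ hζ
    exact (Complex.abs_re_le_norm ζ).trans_lt hlt
  · exact q_ne_zero_of_im_ne_zero (hlt.trans hα.2) him hζ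
end

section
/- Let (h_n) be the sequence of coefficients of the rational power series H(x) = x²(1-2x)/(x⁶ - 5x⁵ + 14x⁴ - 26x³ + 22x² - 8x + 1). Then there exists a constant c > 0 such that h_n ≤ c·(3.709381)^n for all n ≥ 0. -/
/-!
Clearing the denominator gives the recurrence
`h (n+6) = 8 h (n+5) - 22 h (n+4) + 26 h (n+3) - 14 h (n+2) + 5 h (n+1) - h n`, so the windows
`vₙ = (h n, …, h (n+5))` satisfy `vₙ₊₁ = A vₙ` for the companion matrix `A`, whose spectral radius
is `1/α < r = 3.709381`. A quadratic form `Q` with `Q (A v) ≤ r² Q v` (a discrete Lyapunov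
function for `A / r`) then gives `Q vₙ ≤ r^(2n) Q v₀`, and `Q v ≥ 70000 v₀²` turns this into
`h n ≤ c rⁿ`. Since `r` exceeds `1/α` by only about `10⁻⁷`, `Q` is badly conditioned and both
inequalities are certified in exact rational arithmetic.
-/

theorem exists_abs_le_mul_pow_of_lyapunov {f V : ℕ → ℝ} {r d : ℝ} (hr : 0 ≤ r) (hd : 0 < d)
    (hlow : ∀ n, d * f n ^ 2 ≤ V n) (hstep : ∀ n, V (n + 1) ≤ r ^ 2 * V n) :
    ∃ c > 0, ∀ n, |f n| ≤ c * r ^ n := by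
  have hV0 : 0 ≤ V 0 := (by positivity : 0 ≤ d * f 0 ^ 2).trans (hlow 0)
  refine ⟨√(V 0 / d) + 1, by positivity, fun n => abs_le_of_sq_le_sq ?_ (by positivity)⟩
  have hdecay : V n ≤ (r ^ n) ^ 2 * V 0 := by
    rw [← pow_mul, mul_comm n, pow_mul]
    exact le_geom (by positivity) n fun k _ => hstep k
  calc f n ^ 2 ≤ (r ^ n) ^ 2 * (V 0 / d) := by
        rw [mul_div_assoc', le_div_iff₀ hd]; linarith [hlow n]
    _ = (√(V 0 / d) * r ^ n) ^ 2 := by rw [mul_pow, Real.sq_sqrt (by positivity), mul_comm]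
    _ ≤ ((√(V 0 / d) + 1) * r ^ n) ^ 2 := by gcongr; linarith

open PowerSeries

noncomputable def hDenom : ℝ⟦X⟧ :=
  X ^ 6 - 5 * X ^ 5 + 14 * X ^ 4 - 26 * X ^ 3 + 22 * X ^ 2 - 8 * X + 1

noncomputable def hSeries : ℝ⟦X⟧ := X ^ 2 * (1 - 2 * X) * hDenom⁻¹

theorem hSeries_mul_hDenom : hSeries * hDenom = X ^ 2 - 2 * X ^ 3 := by
  rw [hSeries, mul_assoc, PowerSeries.inv_mul_cancel _ (by simp [hDenom])]
  ring

theorem coeff_hSeries_add_six (n : ℕ) :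
    coeff (n + 6) hSeries = 8 * coeff (n + 5) hSeries - 22 * coeff (n + 4) hSeries
      + 26 * coeff (n + 3) hSeries - 14 * coeff (n + 2) hSeries + 5 * coeff (n + 1) hSeries
      - coeff n hSeries := by
  have h := congrArg (coeff (n + 6)) hSeries_mul_hDenom
  simp only [hDenom, ← map_ofNat (C (R := ℝ))] at h
  simp [mul_add, mul_sub, coeff_X_pow, mul_left_comm _ (C _), coeff_mul_X_pow'] at h
  linarith

/-- `vᵀ P v`, with `P` a rounded solution of the Stein equation `r² P - Aᵀ P A = 10⁶ I`. -/
def lyapunovForm (v0 v1 v2 v3 v4 v5 : ℝ) : ℝ :=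
  1678800785573 * v0 ^ 2 - 15882842249742 * v0 * v1 + 42724616026700 * v0 * v2 -
  75779646386308 * v0 * v3 + 53438042232032 * v0 * v4 - 12454622856634 * v0 * v5 +
  37566203737909 * v1 ^ 2 - 202105089474424 * v1 * v2 + 358469042861790 * v1 * v3 -
  252784022722480 * v1 * v4 + 58915512933976 * v1 * v5 + 271829884473696 * v2 ^ 2 -
  964276542821690 * v2 * v3 + 679985366626860 * v2 * v4 - 158481878089736 * v2 * v5 +
  855157310253793 * v3 ^ 2 - 1206074048936458 * v3 * v4 + 281095579148816 * v3 * v5 +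
  425247669403883 * v4 ^ 2 - 198222058000902 * v4 * v5 + 23099470837520 * v5 ^ 2

/-- The matrix of `r² Q v - Q (A v)` differs from `10⁶ I` entrywise by less than `250`, so it is
diagonally dominant, which the squares `(vᵢ ± vⱼ)²` certify. -/
theorem lyapunovForm_shift_le (v0 v1 v2 v3 v4 v5 : ℝ) :
    lyapunovForm v1 v2 v3 v4 v5 (8 * v5 - 22 * v4 + 26 * v3 - 14 * v2 + 5 * v1 - v0) ≤
      (3.709381 : ℝ) ^ 2 * lyapunovForm v0 v1 v2 v3 v4 v5 := by
  unfold lyapunovForm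
  linarith [sq_nonneg v0, sq_nonneg v1, sq_nonneg v2, sq_nonneg v3, sq_nonneg v4, sq_nonneg v5,
    sq_nonneg (v0 + v1), sq_nonneg (v0 - v1), sq_nonneg (v0 + v2), sq_nonneg (v0 - v2),
    sq_nonneg (v0 + v3), sq_nonneg (v0 - v3), sq_nonneg (v0 + v4), sq_nonneg (v0 - v4),
    sq_nonneg (v0 + v5), sq_nonneg (v0 - v5), sq_nonneg (v1 + v2), sq_nonneg (v1 - v2),
    sq_nonneg (v1 + v3), sq_nonneg (v1 - v3), sq_nonneg (v1 + v4), sq_nonneg (v1 - v4),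
    sq_nonneg (v1 + v5), sq_nonneg (v1 - v5), sq_nonneg (v2 + v3), sq_nonneg (v2 - v3),
    sq_nonneg (v2 + v4), sq_nonneg (v2 - v4), sq_nonneg (v2 + v5), sq_nonneg (v2 - v5),
    sq_nonneg (v3 + v4), sq_nonneg (v3 - v4), sq_nonneg (v3 + v5), sq_nonneg (v3 - v5),
    sq_nonneg (v4 + v5), sq_nonneg (v4 - v5)]

/-- An exact `LDLᵀ` decomposition of `Q - 70000 v0²`. -/
theorem le_lyapunovForm (v0 v1 v2 v3 v4 v5 : ℝ) :
    70000 * v0 ^ 2 ≤ lyapunovForm v0 v1 v2 v3 v4 v5 := by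
  rw [← sub_nonneg, show lyapunovForm v0 v1 v2 v3 v4 v5 - 70000 * v0 ^ 2 =
      (23099470837520 : ℝ) * (v5 - (99111029000451 / 23099470837520 : ℝ) * v4 +
        (17568473696801 / 2887433854690 : ℝ) * v3 - (19810234761217 / 5774867709380 : ℝ) * v2 +
        (7364439116747 / 5774867709380 : ℝ) * v1 - (889615918331 / 3299924405360 : ℝ) * v0) ^ 2 +
      (68590102172991886759 / 23099470837520 : ℝ) * (v4 -
        (112190254472331094072 / 68590102172991886759 : ℝ) * v3 +
        (65469866698082658132 / 68590102172991886759 : ℝ) * v2 -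
        (25046589239247113212 / 68590102172991886759 : ℝ) * v1 +
        (5509726550958549353 / 68590102172991886759 : ℝ) * v0) ^ 2 +
      (35460047741285937071964519 / 68590102172991886759 : ℝ) * (v3 -
        (19193541308216610276247415 / 35460047741285937071964519 : ℝ) * v2 +
        (872873143467344067657205 / 3940005304587326341329391 : ℝ) * v1 -
        (629096583207108188460163 / 11820015913761979023988173 : ℝ) * v0) ^ 2 +
      (3782143186008109529076674100857 / 35460047741285937071964519 : ℝ) * (v2 -
        (423741501848797317705392480511 / 3782143186008109529076674100857 : ℝ) * v1 +
        (105474720215627600412819837135 / 3782143186008109529076674100857 : ℝ) * v0) ^ 2 +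
      (309233455955991927599482173864656853 / 3782143186008109529076674100857 : ℝ) * (v1 -
        (1228629744352890432278014467435469 / 103077818651997309199827391288218951 : ℝ) * v0) ^ 2 +
      (100460954951841208646384709056803144207 / 34359272883999103066609130429406317 : ℝ) * v0 ^ 2 by
    unfold lyapunovForm; ring]
  positivity

open PowerSeries in
theorem H_coeff_bound :
    let H : PowerSeries ℝ := X ^ 2 * (1 - 2 * X) *
      (X ^ 6 - 5 * X ^ 5 + 14 * X ^ 4 - 26 * X ^ 3 + 22 * X ^ 2 - 8 * X + 1)⁻¹
    ∃ c : ℝ, 0 < c ∧ ∀ n : ℕ, PowerSeries.coeff (R := ℝ) n H ≤ c * (3.709381 : ℝ) ^ n := by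
  intro H
  set h : ℕ → ℝ := fun n => coeff n hSeries
  obtain ⟨c, hc, hbound⟩ := exists_abs_le_mul_pow_of_lyapunov (f := h) (r := 3.709381)
    (V := fun n => lyapunovForm (h n) (h (n + 1)) (h (n + 2)) (h (n + 3)) (h (n + 4)) (h (n + 5)))
    (by norm_num) (by norm_num : (0 : ℝ) < 70000) (fun n => le_lyapunovForm ..) fun n => by
      simpa only [h, coeff_hSeries_add_six] using lyapunovForm_shift_le ..
  exact ⟨c, hc, fun n => (le_abs_self _).trans (hbound n)⟩
end
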